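/- arXiv:2305.10372 — 2 statements merged into one kernel-verified Lean document; each statement's English description precedes it below -/
import Mathlib

section
/- Let q be a prime power with q ≡ 1 (mod 4). The adjacency matrix A of the Paley graph on F_q satisfies A² = ((q−1)/4)·(J + I) − A, where J is the all-ones matrix and I the identity. -/
/-!
Write `χ` for the quadratic character of `F`, `J` for the all-ones matrix and `S` for the
Jacobsthal matrix `S k l = χ (k - l)`, so that `2 A = J - 1 + S`. Since `χ` is nontrivial, its
values sum to zero, whence `S J = J S = 0`; since `χ (-1) = 1`, `S` is symmetric; and the
correlation sums `∑ x, χ x χ (x + c)` equal `q - 1` for `c = 0` and, by reduction to the Jacobi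
sum `J(χ, χ) = -χ (-1)`, equal `-1` otherwise, i.e. `S ^ 2 = q • 1 - J`. With `J ^ 2 = q • J`,
expanding `(J - 1 + S) ^ 2` gives the identity.
-/

open Matrix

namespace MulChar

lemma IsQuadratic.apply_sq_eq_one {R R' : Type*} [CommMonoid R] [CommRing R']
    {χ : MulChar R R'} (hχ : χ.IsQuadratic) {a : R} (ha : IsUnit a) : χ a ^ 2 = 1 := by
  obtain ⟨u, rfl⟩ := ha
  rw [← pow_apply_coe, hχ.sq_eq_one, one_apply_coe]

variable {F R : Type*} [Field F] [Fintype F] [CommRing R] [IsDomain R] {χ : MulChar F R}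

lemma IsQuadratic.sum_mul_apply_add [DecidableEq F] (hχ : χ.IsQuadratic) (hχ1 : χ ≠ 1) (c : F) :
    ∑ x, χ x * χ (x + c) = if c = 0 then (Fintype.card F : R) - 1 else -1 := by
  split_ifs with hc
  · have hterm : ∀ x, χ x * χ (x + c) = (χ ^ 2) x := fun x => by
      rw [hc, add_zero, sq, mul_apply]
    rw [Finset.sum_congr rfl fun x _ => hterm x, hχ.sq_eq_one, sum_one_eq_card_units,
      Fintype.card_eq_card_units_add_one (α := F), Nat.cast_add, Nat.cast_one,
      add_sub_cancel_right]
  · have hterm : ∀ y, χ (-c * y) * χ (-c * y + c) = χ (-1) * (χ y * χ (1 - y)) := by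
      intro y
      rw [show -c * y + c = c * (1 - y) by ring, show -c * y = -1 * c * y by ring, map_mul,
        map_mul, map_mul]
      linear_combination (χ (-1) * χ y * χ (1 - y)) * hχ.apply_sq_eq_one (Ne.isUnit hc)
    calc ∑ x, χ x * χ (x + c) = ∑ y, χ (-c * y) * χ (-c * y + c) :=
          (Equiv.sum_comp (Equiv.mulLeft₀ (-c) (neg_ne_zero.mpr hc)) _).symm
      _ = χ (-1) * jacobiSum χ χ⁻¹ := by
          simp only [hterm, ← Finset.mul_sum, hχ.inv, jacobiSum]
      _ = -1 := by
          rw [jacobiSum_nontrivial_inv hχ1, mul_neg, ← sq,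
            hχ.apply_sq_eq_one (Ne.isUnit (neg_ne_zero.mpr one_ne_zero))]

end MulChar

lemma allOnes_mul_allOnes {n R : Type*} [Fintype n] [Semiring R] :
    (of fun _ _ => 1 : Matrix n n R) * of (fun _ _ => 1) =
      (Fintype.card n : R) • of fun _ _ => 1 := by
  ext k l
  simp [mul_apply]

section Jacobsthal

variable {F R : Type*} [Field F] [CommRing R]

def jacobsthalMatrix (χ : MulChar F R) : Matrix F F R := of fun k l => χ (k - l)

lemma jacobsthalMatrix_transpose (χ : MulChar F R) :
    (jacobsthalMatrix χ)ᵀ = χ (-1) • jacobsthalMatrix χ := by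
  ext k l
  simp [jacobsthalMatrix, ← map_mul]

lemma two_smul_paley_adjacency_eq (F : Type*) [Field F] [Fintype F] [DecidableEq F]
    (R : Type*) [CommRing R] :
    (2 : R) • (of fun k l : F => if k ≠ l ∧ IsSquare (k - l) then (1 : R) else 0) =
      of (fun _ _ => 1) - 1 +
        jacobsthalMatrix ((quadraticChar F).ringHomComp (Int.castRingHom R)) := by
  ext k l
  simp only [Matrix.smul_apply, Matrix.add_apply, Matrix.sub_apply, of_apply, one_apply,
    jacobsthalMatrix, MulChar.ringHomComp_apply, Int.coe_castRingHom, smul_eq_mul]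
  rcases eq_or_ne k l with rfl | hkl
  · simp
  · have hkl' : k - l ≠ 0 := sub_ne_zero.mpr hkl
    by_cases hsq : IsSquare (k - l)
    · simp [hkl, hsq, (quadraticChar_one_iff_isSquare hkl').mpr hsq, one_add_one_eq_two]
    · simp [hkl, hsq, quadraticChar_neg_one_iff_not_isSquare.mpr hsq]

variable [Fintype F] [IsDomain R] {χ : MulChar F R}

lemma jacobsthalMatrix_mul_allOnes (hχ : χ ≠ 1) :
    jacobsthalMatrix χ * of (fun _ _ => 1) = 0 := by
  ext k l
  simpa [jacobsthalMatrix, mul_apply] using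
    (Equiv.sum_comp (Equiv.subLeft k) χ).trans (MulChar.sum_eq_zero_of_ne_one hχ)

lemma allOnes_mul_jacobsthalMatrix (hχ : χ ≠ 1) :
    of (fun _ _ => 1) * jacobsthalMatrix χ = 0 := by
  ext k l
  simpa [jacobsthalMatrix, mul_apply] using
    (Equiv.sum_comp (Equiv.subRight l) χ).trans (MulChar.sum_eq_zero_of_ne_one hχ)

lemma jacobsthalMatrix_mul_transpose [DecidableEq F] (hχ : χ.IsQuadratic) (hχ1 : χ ≠ 1) :
    jacobsthalMatrix χ * (jacobsthalMatrix χ)ᵀ =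
      (Fintype.card F : R) • 1 - of fun _ _ => 1 := by
  ext k l
  have hsum := hχ.sum_mul_apply_add hχ1 (l - k)
  rw [← (Equiv.subLeft k).sum_comp] at hsum
  simp only [Equiv.subLeft_apply, sub_add_sub_cancel', sub_eq_zero] at hsum
  rcases eq_or_ne k l with rfl | hkl
  · simp [jacobsthalMatrix, mul_apply, hsum]
  · simp [jacobsthalMatrix, mul_apply, hsum, hkl, hkl.symm]

end Jacobsthal

/-- For the Paley graph on a finite field `F` of order `q ≡ 1 (mod 4)`, with
adjacency matrix `A` (where `k ∼ l` iff `k − l` is a nonzero square), one has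
`A² = ((q−1)/4)·(J + I) − A`. -/
theorem paley_adjacency_sq (F : Type*) [Field F] [Fintype F] [DecidableEq F]
    (hq : Fintype.card F % 4 = 1)
    (A : Matrix F F ℝ)
    (hA : A = Matrix.of fun k l : F => if k ≠ l ∧ IsSquare (k - l) then (1 : ℝ) else 0) :
    A ^ 2 = (((Fintype.card F : ℝ) - 1) / 4) •
        (Matrix.of (fun _ _ : F => (1 : ℝ)) + (1 : Matrix F F ℝ)) - A := by
  have hF : ringChar F ≠ 2 := by
    rw [ne_eq, FiniteField.even_card_iff_char_two]
    omega
  set χ := (quadraticChar F).ringHomComp (Int.castRingHom ℝ)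
  have hχ : χ.IsQuadratic := (quadraticChar_isQuadratic F).comp _
  have hχ1 : χ ≠ 1 :=
    (MulChar.ringHomComp_ne_one_iff Int.cast_injective).mpr (quadraticChar_ne_one hF)
  have hsymm : (jacobsthalMatrix χ)ᵀ = jacobsthalMatrix χ := by
    rw [jacobsthalMatrix_transpose, MulChar.ringHomComp_apply, quadraticChar_neg_one hF,
      ZMod.χ₄_nat_one_mod_four hq]
    simp
  have hSS := jacobsthalMatrix_mul_transpose hχ hχ1
  rw [hsymm] at hSS
  have hA2 : A = (2⁻¹ : ℝ) • (of (fun _ _ => 1) - 1 + jacobsthalMatrix χ) := by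
    rw [← two_smul_paley_adjacency_eq, smul_smul, hA]
    norm_num
  rw [hA2, sq, smul_mul_smul]
  simp only [add_mul, mul_add, sub_mul, mul_sub, one_mul, mul_one, hSS, allOnes_mul_allOnes,
    jacobsthalMatrix_mul_allOnes hχ1, allOnes_mul_jacobsthalMatrix hχ1]
  module
end

section
/- In the Paley graph on F_q (q a prime power ≡ 1 mod 4), every two adjacent vertices have exactly (q−5)/4 common neighbours and every two distinct non-adjacent vertices have exactly (q−1)/4 common neighbours. -/
/-!
With `χ` the quadratic character, a vertex `u ∉ {v, w}` contributes `(1 + χ(u - v))(1 + χ(u - w))`,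
which is `4` if `u` is a common neighbour of `v` and `w` and `0` otherwise. Summing this over all `u`
gives `q - 1`: the linear terms vanish, and `∑ χ(u - v) χ(u - w) = -1` is a Jacobi sum `J(χ, χ)` up
to the factor `χ(-1)`. Removing the contributions `1 + χ(±(v - w))` of `u = v, w`, which agree since
`-1` is a square when `q ≡ 1 (mod 4)`, leaves `4N = q - 3 - 2χ(v - w)`.
-/

open Finset

section

variable {F : Type*} [Field F] [Fintype F] [DecidableEq F]

theorem quadraticChar_sum_sub_mul_sub (hF : ringChar F ≠ 2) {v w : F} (hvw : v ≠ w) :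
    ∑ u : F, quadraticChar F (u - v) * quadraticChar F (u - w) = -1 := by
  set χ := quadraticChar F
  have hd : v - w ≠ 0 := sub_ne_zero.2 hvw
  have hχ₁ : χ (-1) ^ 2 = 1 := quadraticChar_sq_one (neg_ne_zero.2 one_ne_zero)
  -- substitute `u = v - (v - w) x`, which turns the sum into `χ(-1) J(χ, χ)`
  have he : Function.Bijective fun x : F => v - (v - w) * x :=
    (Equiv.subLeft v).bijective.comp (mulLeft_bijective₀ _ hd)
  calc ∑ u, χ (u - v) * χ (u - w)
      = ∑ x, χ (v - (v - w) * x - v) * χ (v - (v - w) * x - w) :=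
        (Fintype.sum_bijective _ he _ _ fun _ => rfl).symm
    _ = ∑ x, χ (-1) * (χ (v - w) ^ 2 * (χ x * χ (1 - x))) := by
        refine sum_congr rfl fun x _ => ?_
        rw [← map_pow, ← map_mul, ← map_mul, ← map_mul, ← map_mul]
        congr 1
        ring
    _ = χ (-1) * jacobiSum χ χ⁻¹ := by
        rw [← mul_sum, quadraticChar_sq_one hd, (quadraticChar_isQuadratic F).inv, jacobiSum]
        simp only [one_mul, χ]
    _ = -1 := by
        rw [jacobiSum_nontrivial_inv (quadraticChar_ne_one hF)]
        linear_combination -hχ₁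

theorem one_add_quadraticChar_mul_one_add {x y : F} (hx : x ≠ 0) (hy : y ≠ 0) :
    (1 + quadraticChar F x) * (1 + quadraticChar F y) =
      if IsSquare x ∧ IsSquare y then 4 else 0 := by
  have one_add_eq_ite : ∀ {z : F}, z ≠ 0 → 1 + quadraticChar F z = if IsSquare z then 2 else 0 := by
    intro z hz
    split_ifs with h
    · rw [(quadraticChar_one_iff_isSquare hz).2 h]; norm_num
    · rw [quadraticChar_neg_one_iff_not_isSquare.2 h]; norm_num
  rw [one_add_eq_ite hx, one_add_eq_ite hy]
  split_ifs <;> simp_all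

theorem sum_one_add_quadraticChar_mul_one_add (hF : ringChar F ≠ 2) {v w : F} (hvw : v ≠ w) :
    ∑ u : F, (1 + quadraticChar F (u - v)) * (1 + quadraticChar F (u - w)) =
      Fintype.card F - 1 := by
  have hsum : ∀ c : F, ∑ u : F, quadraticChar F (u - c) = 0 := fun c =>
    (Fintype.sum_equiv (Equiv.subRight c) _ _ fun _ => rfl).trans (quadraticChar_sum_zero hF)
  simp only [add_mul, one_mul, mul_add, mul_one, sum_add_distrib, hsum,
    quadraticChar_sum_sub_mul_sub hF hvw, sum_const, card_univ, nsmul_eq_mul, mul_one]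
  ring

theorem quadraticChar_sub_comm (hq : Fintype.card F % 4 ≠ 3) (a b : F) :
    quadraticChar F (a - b) = quadraticChar F (b - a) := by
  have h : quadraticChar F (-1) = 1 :=
    (quadraticChar_one_iff_isSquare (neg_ne_zero.2 one_ne_zero)).2
      (FiniteField.isSquare_neg_one_iff.2 hq)
  rw [← neg_sub, ← neg_one_mul, map_mul, h, one_mul]

theorem four_mul_card_filter_isSquare_sub (hF : ringChar F ≠ 2) {v w : F} (hvw : v ≠ w) :
    4 * (#{u | (u ≠ v ∧ IsSquare (u - v)) ∧ (u ≠ w ∧ IsSquare (u - w))} : ℤ) =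
      Fintype.card F - 3 - quadraticChar F (v - w) - quadraticChar F (w - v) := by
  set g : F → ℤ := fun u => (1 + quadraticChar F (u - v)) * (1 + quadraticChar F (u - w))
  have hcommon : ∑ u ∈ univ \ {v, w}, g u =
      4 * #{u | (u ≠ v ∧ IsSquare (u - v)) ∧ (u ≠ w ∧ IsSquare (u - w))} := by
    rw [sum_congr rfl fun u hu => ?_, ← sum_filter (fun u => IsSquare (u - v) ∧ IsSquare (u - w)),
      sum_const, nsmul_eq_mul, mul_comm]
    · congr 3
      ext u
      simp only [mem_filter, mem_sdiff, mem_univ, mem_insert, mem_singleton]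
      tauto
    · simp only [mem_sdiff, mem_univ, mem_insert, mem_singleton, not_or, true_and] at hu
      exact one_add_quadraticChar_mul_one_add (sub_ne_zero.2 hu.1) (sub_ne_zero.2 hu.2)
  have htotal : ∑ u, g u = Fintype.card F - 1 := sum_one_add_quadraticChar_mul_one_add hF hvw
  have hsplit := sum_sdiff (subset_univ {v, w}) (f := g)
  rw [sum_pair hvw, hcommon, htotal] at hsplit
  simp only [g, sub_self, quadraticChar_zero] at hsplit
  linarith
end

/-- In the Paley graph on `F_q` (`q` a prime power `≡ 1 (mod 4)`), every two adjacent
vertices have exactly `(q−5)/4` common neighbours and every two distinct non-adjacent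
vertices have exactly `(q−1)/4` common neighbours. -/
theorem paley_common_neighbours (F : Type*) [Field F] [Fintype F] [DecidableEq F]
    (hq : Fintype.card F % 4 = 1)
    (v w : F) (hvw : v ≠ w) :
    (IsSquare (v - w) →
      (Finset.univ.filter
          (fun u : F => (u ≠ v ∧ IsSquare (u - v)) ∧ (u ≠ w ∧ IsSquare (u - w)))).card
        = (Fintype.card F - 5) / 4) ∧
    (¬ IsSquare (v - w) →
      (Finset.univ.filter
          (fun u : F => (u ≠ v ∧ IsSquare (u - v)) ∧ (u ≠ w ∧ IsSquare (u - w)))).card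
        = (Fintype.card F - 1) / 4) := by
  have hF : ringChar F ≠ 2 := fun h => by
    have := FiniteField.even_card_iff_char_two.1 h
    omega
  have hcount := four_mul_card_filter_isSquare_sub hF hvw
  rw [quadraticChar_sub_comm (by omega) w v] at hcount
  constructor
  · intro hsq
    rw [(quadraticChar_one_iff_isSquare (sub_ne_zero.2 hvw)).2 hsq] at hcount
    omega
  · intro hnsq
    rw [quadraticChar_neg_one_iff_not_isSquare.2 hnsq] at hcount
    omega
end
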